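/- arXiv:2410.16540 — 3 statements merged into one kernel-verified Lean document; each statement's English description precedes it below -/
import Mathlib

section
/- For every integer d ≥ 2, real σ > 0, and real D > 0, the quantity L_ICL := σ² + (7+d)/D + σ²/D strictly exceeds L_CoT := σ² + dσ²/D + (1+d)/D − ((d−1)σ² − 2)²/(D((d−1)σ² + 2)), i.e., the leading-order optimal loss of Stepwise ICL is strictly larger than that of Coherent CoT. -/
/-- The leading-order optimal loss of Stepwise ICL strictly exceeds that of
Coherent CoT: `L_ICL − L_CoT = ((d−1)σ²−2)²/(D((d−1)σ²+2)) + ... > 0`,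
equivalently `6 + σ² − dσ² + ((d−1)σ²−2)²/((d−1)σ²+2) > 0`. -/
theorem stmt_2 (d : ℕ) (hd : 2 ≤ d) (σ D : ℝ) (hσ : 0 < σ) (hD : 0 < D)
    (LICL LCoT : ℝ)
    (hICL : LICL = σ ^ 2 + (7 + d) / D + σ ^ 2 / D)
    (hCoT : LCoT = σ ^ 2 + d * σ ^ 2 / D + (1 + d) / D
      - ((d - 1) * σ ^ 2 - 2) ^ 2 / (D * ((d - 1) * σ ^ 2 + 2))) :
    LCoT < LICL ∧
    0 < 6 + σ ^ 2 - d * σ ^ 2 + ((d - 1) * σ ^ 2 - 2) ^ 2 / ((d - 1) * σ ^ 2 + 2) := by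
  have hd1 : (1:ℝ) ≤ (d:ℝ) - 1 := by
    have : (2:ℝ) ≤ (d:ℝ) := by exact_mod_cast hd
    linarith
  have ha : 0 < ((d:ℝ) - 1) * σ ^ 2 := by nlinarith [sq_nonneg σ, hσ]
  have ha2 : 0 < ((d:ℝ) - 1) * σ ^ 2 + 2 := by linarith
  have key : 6 + σ ^ 2 - d * σ ^ 2 + ((d - 1) * σ ^ 2 - 2) ^ 2 / ((d - 1) * σ ^ 2 + 2)
      = 16 / (((d:ℝ) - 1) * σ ^ 2 + 2) := by
    field_simp
    ring
  have hkey : 0 < 6 + σ ^ 2 - d * σ ^ 2 + ((d - 1) * σ ^ 2 - 2) ^ 2 / ((d - 1) * σ ^ 2 + 2) := by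
    rw [key]; positivity
  refine ⟨?_, hkey⟩
  have hdiff : LICL - LCoT
      = (6 + σ ^ 2 - d * σ ^ 2 + ((d - 1) * σ ^ 2 - 2) ^ 2 / ((d - 1) * σ ^ 2 + 2)) / D := by
    rw [hICL, hCoT]
    field_simp
    ring
  nlinarith [div_pos hkey hD]
end

section
/- Under the optimal Coherent CoT parameters with v_y* = v_x* + v_z* and v_z*/v_y* = ((d−1)σ²−2)/((d−1)σ²+2), the excess loss from adding N(0, σ_ε²) noise to the z-coordinates minus the excess loss from adding the same noise to the x-coordinates equals (σ_ε²/D)·((d−1)²σ⁶ + (3d−7)(d−1)σ⁴ − (4d+8d²)σ² + 12)/((d−1)σ²+2)². -/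
/-- At the optimal Coherent CoT parameters (`v_x/v_y = 4/((d−1)σ²+2)`,
`v_z/v_y = ((d−1)σ²−2)/((d−1)σ²+2)`), the excess loss from adding `N(0, σ_ε²)`
noise to the `z`-coordinates minus the excess loss from adding the same noise to
the `x`-coordinates equals
`(σ_ε²/D)·((d−1)²σ⁶ + (3d−7)(d−1)σ⁴ − (4d+8d²)σ² + 12)/((d−1)σ²+2)²`. -/
theorem stmt_8 (d : ℕ) (hd : 2 ≤ d) (σ σε D : ℝ) (hσ : 0 < σ) (hσε : 0 < σε)
    (hD : 0 < D) (θx θz : ℝ)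
    (hx : θx = 4 / ((d - 1) * σ ^ 2 + 2))
    (hz : θz = ((d - 1) * σ ^ 2 - 2) / ((d - 1) * σ ^ 2 + 2)) :
    ((3 + d) / D * θz ^ 2 * σε ^ 2 + θz ^ 2 * σ ^ 2 * σε ^ 2 / D)
      - (d / D * σε ^ 2 + θx ^ 2 * σ ^ 2 * σε ^ 2 / D)
    = σε ^ 2 / D *
        (((d - 1) ^ 2 * σ ^ 6 + (3 * d - 7) * (d - 1) * σ ^ 4
          - (4 * d + 8 * d ^ 2) * σ ^ 2 + 12) / ((d - 1) * σ ^ 2 + 2) ^ 2) := by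
  have hd1 : (1:ℝ) ≤ (d:ℝ) - 1 := by
    have : (2:ℝ) ≤ (d:ℝ) := by exact_mod_cast hd
    linarith
  have hden : ((d:ℝ) - 1) * σ ^ 2 + 2 ≠ 0 := by positivity
  subst hx hz
  field_simp
  ring
end

section
/- For every integer d ≥ 2, the cubic f(θ) = (d−1)²θ³ + (3d−7)(d−1)θ² − (4d+8d²)θ + 12 tends to +∞ as θ → +∞ and hence has at least two positive real roots a < b, with f(θ) > 0 for θ ∈ [0, a) ∪ (b, ∞) and f(θ) < 0 for θ ∈ (a, b). -/
open Filter

set_option maxHeartbeats 1000000 in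
/-- For every integer `d ≥ 2`, the cubic
`f(θ) = (d−1)²θ³ + (3d−7)(d−1)θ² − (4d+8d²)θ + 12` tends to `+∞` as
`θ → +∞` and has two positive real roots `a < b` with `f > 0` on
`[0, a) ∪ (b, ∞)` and `f < 0` on `(a, b)`. -/
theorem stmt_10 (d : ℕ) (hd : 2 ≤ d) (f : ℝ → ℝ)
    (hf : ∀ θ : ℝ, f θ = (d - 1) ^ 2 * θ ^ 3 + (3 * d - 7) * (d - 1) * θ ^ 2
      - (4 * d + 8 * d ^ 2) * θ + 12) :
    Tendsto f atTop atTop ∧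
    ∃ a b : ℝ, 0 < a ∧ a < b ∧ f a = 0 ∧ f b = 0 ∧
      (∀ θ : ℝ, 0 ≤ θ → θ < a → 0 < f θ) ∧
      (∀ θ : ℝ, b < θ → 0 < f θ) ∧
      (∀ θ ∈ Set.Ioo a b, f θ < 0) := by
  have hd2 : (2:ℝ) ≤ (d:ℝ) := by exact_mod_cast hd
  set D : ℝ := (d:ℝ) with hD
  -- continuity
  have hcont : Continuous f := by
    have : f = fun θ : ℝ => (D - 1) ^ 2 * θ ^ 3 + (3 * D - 7) * (D - 1) * θ ^ 2
      - (4 * D + 8 * D ^ 2) * θ + 12 := funext hf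
    rw [this]; continuity
  -- value at 0 and 1
  have hf0 : f 0 = 12 := by rw [hf]; ring
  have hf1 : f 1 < 0 := by rw [hf]; nlinarith
  -- eventual lower bound
  set M : ℝ := 8 * D ^ 2 + 5 * D + 4 with hM
  have hbig : ∀ θ : ℝ, M ≤ θ → θ ≤ f θ := by
    intro θ hθ
    rw [hf]
    have hθ4 : (4:ℝ) ≤ θ := by nlinarith
    have hθ0 : (0:ℝ) ≤ θ := by linarith
    have hA : θ ^ 3 ≤ (D - 1) ^ 2 * θ ^ 3 := by
      nlinarith [mul_nonneg (pow_nonneg hθ0 3) (show (0:ℝ) ≤ (D - 1) ^ 2 - 1 by nlinarith)]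
    have hB : -(D * θ ^ 2) ≤ (3 * D - 7) * (D - 1) * θ ^ 2 := by
      nlinarith [mul_nonneg (sq_nonneg θ)
        (show (0:ℝ) ≤ 3 * D ^ 2 - 9 * D + 7 by nlinarith [sq_nonneg (2 * D - 3)])]
    have hC : 8 * D ^ 2 + 4 * D + 1 ≤ θ * (θ - D) := by
      nlinarith [mul_nonneg hθ0 (show (0:ℝ) ≤ θ - D - 1 by nlinarith)]
    nlinarith [hA, hB, hC, mul_le_mul_of_nonneg_left hC hθ0]
  have htend : Tendsto f atTop atTop := by
    apply tendsto_atTop_mono' atTop _ tendsto_id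
    filter_upwards [eventually_ge_atTop M] with θ hθ using hbig θ hθ
  refine ⟨htend, ?_⟩
  -- roots from IVT
  obtain ⟨r₁, hr₁, hfr₁⟩ : ∃ r ∈ Set.Ioo (0:ℝ) 1, f r = 0 := by
    have := intermediate_value_Ioo' (le_of_lt one_pos) hcont.continuousOn
      (a := 0) (b := 1) ⟨hf1, by rw [hf0]; norm_num⟩
    obtain ⟨r, hr, hfr⟩ := this
    exact ⟨r, hr, hfr⟩
  have hM1 : (1:ℝ) < M := by nlinarith
  have hfM : 0 < f M := lt_of_lt_of_le (by nlinarith) (hbig M le_rfl)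
  obtain ⟨r₂, hr₂, hfr₂⟩ : ∃ r ∈ Set.Ioo (1:ℝ) M, f r = 0 := by
    have := intermediate_value_Ioo (le_of_lt hM1) hcont.continuousOn
      (a := 1) (b := M) ⟨hf1, hfM⟩
    obtain ⟨r, hr, hfr⟩ := this
    exact ⟨r, hr, hfr⟩
  -- a = least nonnegative root
  set S : Set ℝ := Set.Ici (0:ℝ) ∩ f ⁻¹' {0} with hS
  have hSmem : ∀ x : ℝ, x ∈ S ↔ 0 ≤ x ∧ f x = 0 := by
    intro x; simp [hS]
  have hSne : S.Nonempty := ⟨r₁, (hSmem r₁).mpr ⟨le_of_lt hr₁.1, hfr₁⟩⟩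
  have hSbdd : BddBelow S := ⟨0, fun x hx => ((hSmem x).mp hx).1⟩
  have hSclosed : IsClosed S := isClosed_Ici.inter (isClosed_singleton.preimage hcont)
  set a : ℝ := sInf S with ha
  have haS : a ∈ S := hSclosed.csInf_mem hSne hSbdd
  have hfa : f a = 0 := ((hSmem a).mp haS).2
  have ha0 : 0 < a := by
    refine lt_of_le_of_ne ((hSmem a).mp haS).1 fun h => ?_
    rw [← h, hf0] at hfa
    norm_num at hfa
  have hposlow : ∀ θ : ℝ, 0 ≤ θ → θ < a → 0 < f θ := by
    intro t ht hta
    rcases lt_trichotomy (f t) 0 with h | h | h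
    · have ht0 : 0 < t := by
        rcases eq_or_lt_of_le ht with h0 | h0
        · exfalso; rw [← h0, hf0] at h; norm_num at h
        · exact h0
      obtain ⟨r, hr, hfr⟩ := intermediate_value_Ioo' (le_of_lt ht0) hcont.continuousOn
        (a := 0) (b := t) ⟨h, by rw [hf0]; norm_num⟩
      have : a ≤ r := csInf_le hSbdd ((hSmem r).mpr ⟨le_of_lt hr.1, hfr⟩)
      linarith [hr.2]
    · exact absurd (csInf_le hSbdd ((hSmem t).mpr ⟨ht, h⟩)) (by linarith)
    · exact h
  -- b = greatest root
  set T : Set ℝ := f ⁻¹' {0} with hT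
  have hTmem : ∀ x : ℝ, x ∈ T ↔ f x = 0 := by intro x; simp [hT]
  have hTne : T.Nonempty := ⟨r₁, (hTmem r₁).mpr hfr₁⟩
  have hTbdd : BddAbove T := by
    refine ⟨M, fun x hx => ?_⟩
    by_contra hxM
    push_neg at hxM
    have h1 := hbig x (le_of_lt hxM)
    rw [(hTmem x).mp hx] at h1
    nlinarith
  have hTclosed : IsClosed T := isClosed_singleton.preimage hcont
  set b : ℝ := sSup T with hb
  have hbT : b ∈ T := hTclosed.csSup_mem hTne hTbdd
  have hfb : f b = 0 := (hTmem b).mp hbT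
  have hab : a < b := by
    have h1 : a ≤ r₁ := csInf_le hSbdd ((hSmem r₁).mpr ⟨le_of_lt hr₁.1, hfr₁⟩)
    have h2 : r₂ ≤ b := le_csSup hTbdd ((hTmem r₂).mpr hfr₂)
    linarith [hr₁.2, hr₂.1]
  have hposhigh : ∀ θ : ℝ, b < θ → 0 < f θ := by
    intro t htb
    rcases lt_trichotomy (f t) 0 with h | h | h
    · have hMt : t < max M t + 1 := by
        have := le_max_right M t; linarith
      have hfMt : 0 < f (max M t + 1) := by
        have h1 : M ≤ max M t + 1 := by have := le_max_left M t; linarith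
        have h2 := hbig _ h1
        nlinarith
      obtain ⟨r, hr, hfr⟩ := intermediate_value_Ioo (le_of_lt hMt) hcont.continuousOn
        (a := t) (b := max M t + 1) ⟨h, hfMt⟩
      have : r ≤ b := le_csSup hTbdd ((hTmem r).mpr hfr)
      linarith [hr.1]
    · exact absurd (le_csSup hTbdd ((hTmem t).mpr h)) (by linarith)
    · exact h
  -- factorization for negativity on (a,b)
  have hb0 : 0 < b := lt_trans ha0 hab
  clear_value a b
  obtain ⟨c, hc⟩ : ∃ c : ℝ, c = (D - 1) ^ 2 := ⟨_, rfl⟩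
  have hc0 : 0 < c := by rw [hc]; nlinarith
  obtain ⟨s, hs⟩ : ∃ s : ℝ, s = -12 / (c * a * b) := ⟨_, rfl⟩
  have hs0 : s < 0 := by
    rw [hs]
    apply div_neg_of_neg_of_pos
    · norm_num
    · positivity
  have hcabs : c * a * b * s = -12 := by
    rw [hs]
    field_simp
  obtain ⟨P, hP⟩ : ∃ P : ℝ, P = (3 * D - 7) * (D - 1) + c * (a + b + s) := ⟨_, rfl⟩
  obtain ⟨Q, hQ⟩ : ∃ Q : ℝ, Q = -(4 * D + 8 * D ^ 2) - c * (a * b + a * s + b * s) := ⟨_, rfl⟩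
  have key : ∀ θ : ℝ, f θ = c * (θ - a) * (θ - b) * (θ - s) + P * θ ^ 2 + Q * θ := by
    intro θ
    rw [hf]
    linear_combination (-(θ^3)) * hc - θ^2 * hP - θ * hQ + hcabs
  have hPa : P * a ^ 2 + Q * a = 0 := by
    have h := key a
    rw [hfa] at h
    linear_combination -h
  have hPb : P * b ^ 2 + Q * b = 0 := by
    have h := key b
    rw [hfb] at h
    linear_combination -h
  have hPQa : P * a + Q = 0 := by
    have h : a * (P * a + Q) = 0 := by linear_combination hPa
    rcases mul_eq_zero.mp h with h | h
    · exact absurd h (by linarith)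
    · exact h
  have hPQb : P * b + Q = 0 := by
    have h : b * (P * b + Q) = 0 := by linear_combination hPb
    rcases mul_eq_zero.mp h with h | h
    · exact absurd h (by linarith)
    · exact h
  have hP0 : P = 0 := by
    have h : P * (a - b) = 0 := by linear_combination hPQa - hPQb
    rcases mul_eq_zero.mp h with h | h
    · exact h
    · exact absurd h (by intro h'; apply absurd hab; simp [sub_eq_zero.mp h'])
  have hQ0 : Q = 0 := by
    have := hPQa
    rw [hP0] at this
    linarith
  refine ⟨a, b, ha0, hab, hfa, hfb, hposlow, hposhigh, ?_⟩
  intro t ht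
  have hkey := key t
  rw [hP0, hQ0] at hkey
  have h1 : 0 < t - a := by linarith [ht.1]
  have h2 : t - b < 0 := by linarith [ht.2]
  have h3 : 0 < t - s := by linarith [ht.1, ha0]
  calc f t = c * (t - a) * (t - b) * (t - s) := by rw [hkey]; ring
    _ < 0 := mul_neg_of_neg_of_pos
        (mul_neg_of_pos_of_neg (mul_pos hc0 h1) h2) h3
end
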